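/- For any fixed real number r0 > 0, the series I_1(m, r0) tends to 0 as the integer m tends to infinity, where I_1(m, r0) = ∑_{k=1}^∞ ((−1)^k · Γ(m+3/2) · √(2m+3) / (k! · Γ(m+k+3/2))) · (r0/2)^{2k} · r0^{−3/2}. -/

import Mathlib

open Real Filter Topology

/-- `I₁(m, r₀)` from the paper: the series
`∑_{k=1}^∞ ((−1)^k Γ(m+3/2) √(2m+3) / (k! Γ(m+k+3/2))) (r₀/2)^{2k} r₀^{−3/2}`. -/
noncomputable def I1 (m : ℕ) (r0 : ℝ) : ℝ :=
  ∑' k : ℕ,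
    ((-1 : ℝ) ^ (k + 1) * Real.Gamma ((m : ℝ) + 3 / 2) * Real.sqrt (2 * (m : ℝ) + 3) /
        ((Nat.factorial (k + 1) : ℝ) * Real.Gamma ((m : ℝ) + (k + 1 : ℕ) + 3 / 2))) *
      (r0 / 2) ^ (2 * (k + 1)) * r0 ^ (-(3 / 2) : ℝ)

open scoped Nat

namespace Real

theorem pow_mul_Gamma_le_Gamma_add_nat {x : ℝ} (hx : 0 < x) (n : ℕ) :
    x ^ n * Gamma x ≤ Gamma (x + n) := by
  induction n with
  | zero => simp
  | succ n ih =>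
    have hxn : 0 < x + n := by positivity
    calc x ^ (n + 1) * Gamma x = x * (x ^ n * Gamma x) := by ring
      _ ≤ (x + n) * Gamma (x + n) := by
          gcongr
          linarith
      _ = Gamma (x + (n + 1 : ℕ)) := by
          rw [Nat.cast_succ, ← add_assoc, Gamma_add_one hxn.ne']

theorem Gamma_div_factorial_mul_Gamma_add_nat_mul_pow_le {x q : ℝ} (hx : 0 < x) (hq : 0 ≤ q)
    (n : ℕ) : Gamma x / (n ! * Gamma (x + n)) * q ^ n ≤ (q / x) ^ n := by
  have hfact : (1 : ℝ) ≤ n ! := by exact_mod_cast n.factorial_pos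
  have hΓ : 0 < Gamma (x + n) := Gamma_pos_of_pos (by positivity)
  rw [div_pow, div_mul_eq_mul_div, div_le_div_iff₀ (by positivity) (by positivity)]
  calc Gamma x * q ^ n * x ^ n = q ^ n * (x ^ n * Gamma x) := by ring
    _ ≤ q ^ n * (n ! * Gamma (x + n)) :=
        mul_le_mul_of_nonneg_left
          ((pow_mul_Gamma_le_Gamma_add_nat hx n).trans (le_mul_of_one_le_left hΓ.le hfact))
          (by positivity)
    _ = _ := by ring

end Real

/-- With `x = (r₀/2)² / (m + 3/2)`, the `k`-th term is at most `x^(k+1)` up to the prefactor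
`√(2m+3) · |r₀^(-3/2)|`, so for `x ≤ 1/2` the geometric series bounds `I₁` by twice its first term. -/
theorem abs_I1_le (m : ℕ) (r0 : ℝ) (hm : 2 * (r0 / 2) ^ 2 ≤ m + 3 / 2) :
    |I1 m r0| ≤ 4 * (r0 / 2) ^ 2 * |r0 ^ (-(3 / 2) : ℝ)| * (√(2 * m + 3) / (2 * m + 3)) := by
  set X : ℝ := m + 3 / 2
  set q : ℝ := (r0 / 2) ^ 2
  set A : ℝ := |√(2 * m + 3) * r0 ^ (-(3 / 2) : ℝ)|
  have hX : 0 < X := by positivity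
  have hx0 : 0 ≤ q / X := by positivity
  have hx : q / X ≤ 1 / 2 := by rw [div_le_iff₀ hX]; linarith
  have hterm : ∀ k : ℕ,
      ‖((-1 : ℝ) ^ (k + 1) * Gamma ((m : ℝ) + 3 / 2) * √(2 * (m : ℝ) + 3) /
        ((k + 1)! * Gamma ((m : ℝ) + (k + 1 : ℕ) + 3 / 2))) *
        (r0 / 2) ^ (2 * (k + 1)) * r0 ^ (-(3 / 2) : ℝ)‖ ≤ A * (q / X) * (q / X) ^ k := by
    intro k
    have hsplit : ((-1 : ℝ) ^ (k + 1) * Gamma ((m : ℝ) + 3 / 2) * √(2 * (m : ℝ) + 3) /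
        ((k + 1)! * Gamma ((m : ℝ) + (k + 1 : ℕ) + 3 / 2))) *
        (r0 / 2) ^ (2 * (k + 1)) * r0 ^ (-(3 / 2) : ℝ) = (-1) ^ (k + 1) *
          (√(2 * m + 3) * r0 ^ (-(3 / 2) : ℝ)) *
          (Gamma X / ((k + 1)! * Gamma (X + (k + 1 : ℕ))) * q ^ (k + 1)) := by
      rw [add_right_comm, pow_mul]
      ring
    rw [hsplit, mul_assoc A, ← pow_succ', norm_mul, norm_mul, norm_pow, norm_neg, norm_one,
      one_pow, one_mul, Real.norm_eq_abs, Real.norm_of_nonneg (by positivity)]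
    gcongr
    exact Gamma_div_factorial_mul_Gamma_add_nat_mul_pow_le hX (by positivity) _
  have hsum := tsum_of_norm_bounded
    ((hasSum_geometric_of_lt_one hx0 (by linarith)).mul_left (A * (q / X))) hterm
  have hgeom : (1 - q / X)⁻¹ ≤ 2 := by
    rw [inv_le_comm₀ (by linarith) two_pos]; linarith
  calc |I1 m r0| ≤ A * (q / X) * (1 - q / X)⁻¹ := hsum
    _ ≤ A * (q / X) * 2 := by gcongr
    _ = 4 * q * |r0 ^ (-(3 / 2) : ℝ)| * (√(2 * m + 3) / (2 * m + 3)) := by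
        simp only [A, X, abs_mul, abs_of_nonneg (sqrt_nonneg _)]
        field_simp
        ring

theorem tendsto_sqrt_div_self_atTop : Tendsto (fun x : ℝ => √x / x) atTop (𝓝 0) := by
  simpa only [sqrt_div_self', one_div, Function.comp_def] using
    tendsto_inv_atTop_zero.comp tendsto_sqrt_atTop

theorem I1_tendsto_zero_general (r0 : ℝ) :
    Tendsto (fun m : ℕ => I1 m r0) atTop (𝓝 0) := by
  have hlin : Tendsto (fun m : ℕ => 2 * (m : ℝ) + 3) atTop atTop :=
    tendsto_atTop_add_const_right _ _
      ((tendsto_natCast_atTop_atTop (R := ℝ)).const_mul_atTop two_pos)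
  have hbound := (tendsto_sqrt_div_self_atTop.comp hlin).const_mul
    (4 * (r0 / 2) ^ 2 * |r0 ^ (-(3 / 2) : ℝ)|)
  rw [mul_zero] at hbound
  refine squeeze_zero_norm' ?_ hbound
  filter_upwards [(tendsto_natCast_atTop_atTop (R := ℝ)).eventually_ge_atTop (2 * (r0 / 2) ^ 2)]
    with m hm
  exact abs_I1_le m r0 (by linarith)

theorem I1_tendsto_zero (r0 : ℝ) (hr0 : 0 < r0) :
    Tendsto (fun m : ℕ => I1 m r0) atTop (𝓝 0) :=
  I1_tendsto_zero_general r0
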